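/- Let n ≥ 3 be an odd integer, and let γ_n : {0,…,n−1} → [0,∞) and γ_{2n} : {0,…,2n−1} → [0,∞) satisfy: γ_n(0) = γ_{2n}(0) = 0; γ_n(k) = γ_n(n−k) for 1 ≤ k ≤ n−1; γ_{2n}(k) = γ_{2n}(2n−k) for 1 ≤ k ≤ 2n−1; γ_{2n}(k) ≥ γ_n(k) for 1 ≤ k ≤ (n−1)/2; and γ_{2n}(n−k) − γ_{2n}(k) − 1 ≥ 0 for 0 ≤ k ≤ (n−1)/2. Assume further that for all real x ≥ 0: γ_{2n}(n)·(1−x)² − (1 + x²) + 2x ≥ 0. Then for all a, b ∈ [0,∞)ⁿ, writing λ = (a_0, b_0, a_1, b_1, …, a_{n−1}, b_{n−1}) ∈ [0,∞)^{2n}: ⟨a, Γ(n)a⟩ + ⟨b, Γ(n)b⟩ + (1/(2n))·(‖a‖₂ − ‖b‖₂)² ≤ 2⟨λ, Γ(2n)λ⟩. -/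

import Mathlib

open scoped BigOperators ComplexOrder

/-- The `m × m` DFT matrix with entries `e^{2πijk/m}`. -/
noncomputable def dftMatrix (m : ℕ) : Matrix (Fin m) (Fin m) ℂ :=
  Matrix.of fun j k => Complex.exp (2 * Real.pi * Complex.I * (j.val : ℂ) * (k.val : ℂ) / m)

/-- `Γ(m) = (1/m)·F_m·diag(γ(0),…,γ(m-1))·F_m⁻¹` for a weight `γ : ℕ → ℝ`. -/
noncomputable def GammaMat (m : ℕ) (γ : ℕ → ℝ) : Matrix (Fin m) (Fin m) ℂ :=
  (1 / m : ℂ) • (dftMatrix m * Matrix.diagonal (fun k : Fin m => (γ k.val : ℂ)) * (dftMatrix m)⁻¹)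

/-- `⟨u, Mu⟩ = ∑_j conj(u_j) (Mu)_j` for a real vector `u`. -/
noncomputable def quadForm (m : ℕ) (M : Matrix (Fin m) (Fin m) ℂ) (u : Fin m → ℝ) : ℂ :=
  ∑ j : Fin m, (starRingEnd ℂ) (u j : ℂ) * M.mulVec (fun i => (u i : ℂ)) j

/-- The interleaved vector `λ = (a_0, b_0, a_1, b_1, …, a_{n-1}, b_{n-1})`. -/
noncomputable def interleave (n : ℕ) (a b : Fin n → ℝ) : Fin (2 * n) → ℝ :=
  fun j =>
    if j.val % 2 = 0 then a ⟨j.val / 2, by have := j.isLt; omega⟩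
    else b ⟨j.val / 2, by have := j.isLt; omega⟩

/-!
`Γ(m)` is diagonalised by the DFT: `⟨u, Γ(m) u⟩ = m⁻² ∑ₖ γ(k) |û(k)|²`. The DFT of the
interleaved vector `λ` of length `2n` splits as `λ̂(k) = â(k) + ωᵏ b̂(k)` and
`λ̂(n + k) = â(k) - ωᵏ b̂(k)` with `|ωᵏ| = 1`. For `k < n`, the hypotheses (with `n` odd, so that
`k` or `n - k` is at most `(n - 1) / 2`) make one of `γ_{2n}(k)` and
`γ_{2n}(n + k) = γ_{2n}(n - k)` at least `γ_n(k)` and the other larger by at least `1`. The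
parallelogram law and the reverse triangle inequality then give
`2 γ_n(k) (|â(k)|² + |b̂(k)|²) + (|â(k)| - |b̂(k)|)²
  ≤ γ_{2n}(k) |λ̂(k)|² + γ_{2n}(n + k) |λ̂(n + k)|²`.
Summing over `k`, the reverse triangle inequality in `ℓ²` and Parseval's identity bound
`∑ₖ (|â(k)| - |b̂(k)|)²` from below by `n (‖a‖₂ - ‖b‖₂)²`.
-/

open Complex Finset Matrix ComplexConjugate

lemma exp_two_pi_I_mul_mul_div (m j k : ℕ) :
    exp (2 * Real.pi * I * j * k / m) = exp (2 * Real.pi * I / m) ^ (j * k) := by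
  rw [← exp_nat_mul]; push_cast; ring_nf

lemma dftMatrix_mul_conjTranspose {m : ℕ} (hm : m ≠ 0) :
    dftMatrix m * (dftMatrix m)ᴴ = (m : ℂ) • 1 := by
  ext j l
  simp only [mul_apply, conjTranspose_apply, dftMatrix, of_apply, exp_two_pi_I_mul_mul_div,
    star_pow, Matrix.smul_apply, one_apply, smul_eq_mul]
  set ζ := exp (2 * Real.pi * I / m)
  have hζ : IsPrimitiveRoot ζ m := isPrimitiveRoot_exp m hm
  have hζ0 : ζ ≠ 0 := exp_ne_zero _
  have hstar : star ζ = ζ⁻¹ := (inv_eq_conj (hζ.norm'_eq_one hm)).symm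
  set x := ζ ^ (j : ℕ) * (ζ ^ (l : ℕ))⁻¹
  have hterm : ∀ k : Fin m, ζ ^ ((j : ℕ) * k) * star ζ ^ ((l : ℕ) * k) = x ^ (k : ℕ) := by
    intro k; rw [hstar, mul_pow, inv_pow, inv_pow, ← pow_mul, ← pow_mul]
  rw [Finset.sum_congr rfl fun k _ => hterm k, Fin.sum_univ_eq_sum_range (x ^ ·)]
  by_cases hjl : j = l
  · subst hjl
    simp [x, hζ0]
  · have hx : x ≠ 1 := fun h => hjl <| Fin.ext <| hζ.pow_inj j.2 l.2 <| by
      rwa [mul_inv_eq_one₀ (pow_ne_zero _ hζ0)] at h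
    have hxm : x ^ m = 1 := by
      rw [mul_pow, inv_pow, ← pow_mul, ← pow_mul, mul_comm _ m, mul_comm _ m, pow_mul, pow_mul,
        hζ.pow_eq_one, one_pow, one_pow, inv_one, mul_one]
    rw [geom_sum_eq hx, hxm, sub_self, zero_div, if_neg hjl, mul_zero]

lemma inv_dftMatrix {m : ℕ} (hm : m ≠ 0) : (dftMatrix m)⁻¹ = (m : ℂ)⁻¹ • (dftMatrix m)ᴴ :=
  inv_eq_right_inv <| by
    rw [Matrix.mul_smul, dftMatrix_mul_conjTranspose hm, smul_smul,
      inv_mul_cancel₀ (Nat.cast_ne_zero.2 hm), one_smul]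

lemma star_dotProduct_mul_diagonal_mul_conjTranspose_mulVec {ι κ : Type*} [Fintype ι]
    [Fintype κ] [DecidableEq κ] (A : Matrix ι κ ℂ) (d : κ → ℂ) (v : ι → ℂ) :
    star v ⬝ᵥ (A * diagonal d * Aᴴ) *ᵥ v = ∑ k, d k * ‖(Aᴴ *ᵥ v) k‖ ^ 2 := by
  rw [← mulVec_mulVec, ← mulVec_mulVec, dotProduct_mulVec, ← conjTranspose_conjTranspose A,
    ← star_mulVec, conjTranspose_conjTranspose]
  refine Finset.sum_congr rfl fun k _ => ?_
  rw [mulVec_diagonal, Pi.star_apply, ← conj_mul', starRingEnd_apply]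
  ring

/-- Indexed by `k : ℕ` rather than `Fin m`, so that `m`-periodicity in `k` can be stated. -/
noncomputable def dftCoeff (m : ℕ) (u : Fin m → ℝ) (k : ℕ) : ℂ :=
  ∑ j : Fin m, u j * exp (2 * Real.pi * I * (j.val : ℂ) * (k : ℂ) / m)

lemma conjTranspose_dftMatrix_mulVec (m : ℕ) (u : Fin m → ℝ) :
    (dftMatrix m)ᴴ *ᵥ (fun j => (u j : ℂ)) = fun k : Fin m => conj (dftCoeff m u k) := by
  ext k
  simp [mulVec, dotProduct, dftMatrix, dftCoeff, mul_comm]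

lemma quadForm_eq_star_dotProduct {m : ℕ} (M : Matrix (Fin m) (Fin m) ℂ) (u : Fin m → ℝ) :
    quadForm m M u = star (fun j => (u j : ℂ)) ⬝ᵥ M *ᵥ (fun j => (u j : ℂ)) := rfl

lemma GammaMat_eq {m : ℕ} (hm : m ≠ 0) (γ : ℕ → ℝ) :
    GammaMat m γ = ((m : ℂ) ^ 2)⁻¹ •
      (dftMatrix m * diagonal (fun k : Fin m => (γ k : ℂ)) * (dftMatrix m)ᴴ) := by
  rw [GammaMat, inv_dftMatrix hm, Matrix.mul_smul, smul_smul]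
  ring_nf

lemma quadForm_GammaMat {m : ℕ} (hm : m ≠ 0) (γ : ℕ → ℝ) (u : Fin m → ℝ) :
    quadForm m (GammaMat m γ) u =
      ((∑ k ∈ range m, γ k * ‖dftCoeff m u k‖ ^ 2) / m ^ 2 : ℝ) := by
  rw [quadForm_eq_star_dotProduct, GammaMat_eq hm, smul_mulVec, dotProduct_smul,
    star_dotProduct_mul_diagonal_mul_conjTranspose_mulVec, conjTranspose_dftMatrix_mulVec,
    ← Fin.sum_univ_eq_sum_range (fun k => γ k * ‖dftCoeff m u k‖ ^ 2)]
  simp [div_eq_inv_mul]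

lemma sum_norm_dftCoeff_sq {m : ℕ} (hm : m ≠ 0) (u : Fin m → ℝ) :
    ∑ k ∈ range m, ‖dftCoeff m u k‖ ^ 2 = m * ∑ j, u j ^ 2 := by
  have h := star_dotProduct_mul_diagonal_mul_conjTranspose_mulVec (dftMatrix m) (fun _ => 1)
    (fun j => (u j : ℂ))
  rw [diagonal_one, Matrix.mul_one, dftMatrix_mul_conjTranspose hm, conjTranspose_dftMatrix_mulVec,
    smul_mulVec, one_mulVec, dotProduct_smul] at h
  rw [← Fin.sum_univ_eq_sum_range (fun k => ‖dftCoeff m u k‖ ^ 2)]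
  simp only [dotProduct, Pi.star_apply, Complex.star_def, conj_ofReal, one_mul, Complex.norm_conj,
    ← sq, smul_eq_mul] at h
  exact_mod_cast h.symm

lemma dftCoeff_add_self (m : ℕ) (u : Fin m → ℝ) (k : ℕ) :
    dftCoeff m u (m + k) = dftCoeff m u k := by
  rcases eq_or_ne m 0 with rfl | hm
  · simp [dftCoeff]
  · simp only [dftCoeff, exp_two_pi_I_mul_mul_div]
    rw [Finset.sum_congr rfl fun j _ => by
      rw [mul_add, pow_add, mul_comm (j : ℕ) m, pow_mul, (isPrimitiveRoot_exp m hm).pow_eq_one,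
        one_pow, one_mul]]

lemma Fin.sum_univ_two_mul {M : Type*} [AddCommMonoid M] (n : ℕ) (f : Fin (2 * n) → M) :
    ∑ j, f j = ∑ i : Fin n, (f ⟨2 * i, by omega⟩ + f ⟨2 * i + 1, by omega⟩) := by
  rw [← (finProdFinEquiv.trans (finCongr (Nat.mul_comm n 2))).sum_comp, Fintype.sum_prod_type]
  refine Finset.sum_congr rfl fun i _ => ?_
  rw [Fin.sum_univ_two]
  congr 2
  · ext; simp
  · ext; simp; omega

@[simp] lemma interleave_two_mul (n : ℕ) (a b : Fin n → ℝ) (i : Fin n) :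
    interleave n a b ⟨2 * i, by omega⟩ = a i := by
  simp [interleave]

@[simp] lemma interleave_two_mul_add_one (n : ℕ) (a b : Fin n → ℝ) (i : Fin n) :
    interleave n a b ⟨2 * i + 1, by omega⟩ = b i := by
  simp [interleave, Nat.add_mod, Nat.add_div]

lemma dftCoeff_interleave (n : ℕ) (a b : Fin n → ℝ) (k : ℕ) :
    dftCoeff (2 * n) (interleave n a b) k =
      dftCoeff n a k + exp (Real.pi * I * k / n) * dftCoeff n b k := by
  rw [dftCoeff, Fin.sum_univ_two_mul, sum_add_distrib, dftCoeff, dftCoeff, mul_sum]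
  congr 1 <;> refine Finset.sum_congr rfl fun i _ => ?_
  · simp only [interleave_two_mul]
    congr 2
    push_cast
    ring
  · simp only [interleave_two_mul_add_one]
    rw [mul_left_comm, ← exp_add]
    congr 2
    push_cast
    ring

lemma dftCoeff_interleave_add_self (n : ℕ) (a b : Fin n → ℝ) (k : ℕ) :
    dftCoeff (2 * n) (interleave n a b) (n + k) =
      dftCoeff n a k - exp (Real.pi * I * k / n) * dftCoeff n b k := by
  rcases eq_or_ne n 0 with rfl | hn
  · simp [dftCoeff]
  have hphase : exp (Real.pi * I * ((n + k : ℕ) : ℂ) / n) = -exp (Real.pi * I * k / n) := by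
    rw [← neg_one_mul, ← exp_pi_mul_I, ← exp_add]
    congr 1
    field_simp
    push_cast
    ring
  rw [dftCoeff_interleave, dftCoeff_add_self, dftCoeff_add_self, hphase, neg_mul, ← sub_eq_add_neg]

lemma norm_exp_pi_mul_I_mul_div (k n : ℕ) : ‖exp (Real.pi * I * k / n)‖ = 1 := by
  rw [norm_exp]
  simp

lemma two_mul_mul_add_sq_le_parallelogram {E : Type*} [NormedAddCommGroup E]
    [InnerProductSpace ℝ E] {g G G' : ℝ} (hg : g ≤ G) (hG : G + 1 ≤ G') (x y : E) :
    2 * g * (‖x‖ ^ 2 + ‖y‖ ^ 2) + (‖x‖ - ‖y‖) ^ 2 ≤ G * ‖x + y‖ ^ 2 + G' * ‖x - y‖ ^ 2 := by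
  have hpar := parallelogram_law_with_norm ℝ x y
  have hrev : (‖x‖ - ‖y‖) ^ 2 ≤ ‖x - y‖ ^ 2 :=
    sq_le_sq.2 ((abs_norm_sub_norm_le x y).trans (le_abs_self _))
  calc 2 * g * (‖x‖ ^ 2 + ‖y‖ ^ 2) + (‖x‖ - ‖y‖) ^ 2
      ≤ 2 * G * (‖x‖ ^ 2 + ‖y‖ ^ 2) + (G' - G) * ‖x - y‖ ^ 2 := by
        linarith [mul_le_mul_of_nonneg_right hg (by positivity : 0 ≤ ‖x‖ ^ 2 + ‖y‖ ^ 2),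
          mul_le_mul_of_nonneg_right (le_sub_iff_add_le'.2 hG) (sq_nonneg ‖x - y‖)]
    _ = G * ‖x + y‖ ^ 2 + G' * ‖x - y‖ ^ 2 := by linear_combination (-G) * hpar

lemma sq_sqrt_sum_sub_sqrt_sum_le {ι : Type*} (s : Finset ι) (f g : ι → ℝ) :
    (√(∑ i ∈ s, f i ^ 2) - √(∑ i ∈ s, g i ^ 2)) ^ 2 ≤ ∑ i ∈ s, (f i - g i) ^ 2 := by
  have hcs := Real.sum_mul_le_sqrt_mul_sqrt s f g
  have hexpand : ∑ i ∈ s, (f i - g i) ^ 2 =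
      ∑ i ∈ s, f i ^ 2 + ∑ i ∈ s, g i ^ 2 - 2 * ∑ i ∈ s, f i * g i := by
    simp only [sub_sq, sum_add_distrib, sum_sub_distrib, mul_sum, mul_assoc]
    ring
  rw [hexpand, sub_sq, Real.sq_sqrt (sum_nonneg fun i _ => sq_nonneg _),
    Real.sq_sqrt (sum_nonneg fun i _ => sq_nonneg _)]
  linarith

lemma two_mul_mul_add_sq_le_dftCoeff_interleave (n : ℕ) (a b : Fin n → ℝ) (k : ℕ) {g G G' : ℝ}
    (h : (g ≤ G ∧ G + 1 ≤ G') ∨ (g ≤ G' ∧ G' + 1 ≤ G)) :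
    2 * g * (‖dftCoeff n a k‖ ^ 2 + ‖dftCoeff n b k‖ ^ 2)
        + (‖dftCoeff n a k‖ - ‖dftCoeff n b k‖) ^ 2
      ≤ G * ‖dftCoeff (2 * n) (interleave n a b) k‖ ^ 2
        + G' * ‖dftCoeff (2 * n) (interleave n a b) (n + k)‖ ^ 2 := by
  set y := exp (Real.pi * I * k / n) * dftCoeff n b k
  have hy : ‖y‖ = ‖dftCoeff n b k‖ := by rw [norm_mul, norm_exp_pi_mul_I_mul_div, one_mul]
  rw [dftCoeff_interleave, dftCoeff_interleave_add_self, ← hy]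
  rcases h with ⟨hg, hG⟩ | ⟨hg, hG⟩
  · exact two_mul_mul_add_sq_le_parallelogram hg hG _ y
  · have h := two_mul_mul_add_sq_le_parallelogram hg hG (dftCoeff n a k) (-y)
    rw [norm_neg, ← sub_eq_add_neg, sub_neg_eq_add] at h
    linarith

lemma sum_two_mul_mul_add_sq_le_dftCoeff_interleave (n : ℕ) (a b : Fin n → ℝ) {g G : ℕ → ℝ}
    (h : ∀ k < n, (g k ≤ G k ∧ G k + 1 ≤ G (n + k)) ∨ (g k ≤ G (n + k) ∧ G (n + k) + 1 ≤ G k)) :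
    ∑ k ∈ range n, (2 * g k * (‖dftCoeff n a k‖ ^ 2 + ‖dftCoeff n b k‖ ^ 2)
        + (‖dftCoeff n a k‖ - ‖dftCoeff n b k‖) ^ 2)
      ≤ ∑ k ∈ range (2 * n), G k * ‖dftCoeff (2 * n) (interleave n a b) k‖ ^ 2 := by
  rw [show range (2 * n) = range (n + n) by rw [two_mul], sum_range_add, ← sum_add_distrib]
  exact sum_le_sum fun k hk =>
    two_mul_mul_add_sq_le_dftCoeff_interleave n a b k (h k (mem_range.1 hk))

lemma weights_dichotomy {n : ℕ} (hno : Odd n) {γn γ2n : ℕ → ℝ}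
    (h00 : γn 0 = 0) (h00' : γ2n 0 = 0)
    (hsymn : ∀ k, 1 ≤ k → k ≤ n - 1 → γn k = γn (n - k))
    (hsym2n : ∀ k, 1 ≤ k → k ≤ 2 * n - 1 → γ2n k = γ2n (2 * n - k))
    (hge : ∀ k, 1 ≤ k → k ≤ (n - 1) / 2 → γn k ≤ γ2n k)
    (hgap : ∀ k, k ≤ (n - 1) / 2 → 0 ≤ γ2n (n - k) - γ2n k - 1) {k : ℕ} (hk : k < n) :
    (γn k ≤ γ2n k ∧ γ2n k + 1 ≤ γ2n (n + k)) ∨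
      (γn k ≤ γ2n (n + k) ∧ γ2n (n + k) + 1 ≤ γ2n k) := by
  obtain ⟨m, hm⟩ := hno
  have hreflect : γ2n (n + k) = γ2n (n - k) := by
    rcases Nat.eq_zero_or_pos k with rfl | hk0
    · rfl
    · rw [hsym2n (n + k) (by omega) (by omega)]
      congr 1
      omega
  rw [hreflect]
  rcases le_or_gt k ((n - 1) / 2) with hle | hgt
  · refine Or.inl ⟨?_, by linarith [hgap k hle]⟩
    rcases Nat.eq_zero_or_pos k with rfl | hk0
    · rw [h00, h00']
    · exact hge k hk0 hle
  · have hle : n - k ≤ (n - 1) / 2 := by omega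
    have hgap' := hgap (n - k) hle
    rw [Nat.sub_sub_self hk.le] at hgap'
    exact Or.inr ⟨hsymn k (by omega) (by omega) ▸ hge (n - k) (by omega) hle, by linarith⟩

theorem dirichlet_compare_odd_general (n : ℕ) (hno : Odd n)
    (γn γ2n : ℕ → ℝ)
    (h00 : γn 0 = 0) (h00' : γ2n 0 = 0)
    (hsymn : ∀ k, 1 ≤ k → k ≤ n - 1 → γn k = γn (n - k))
    (hsym2n : ∀ k, 1 ≤ k → k ≤ 2 * n - 1 → γ2n k = γ2n (2 * n - k))
    (hge : ∀ k, 1 ≤ k → k ≤ (n - 1) / 2 → γn k ≤ γ2n k)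
    (hgap : ∀ k, k ≤ (n - 1) / 2 → 0 ≤ γ2n (n - k) - γ2n k - 1)
    (a b : Fin n → ℝ) :
    quadForm n (GammaMat n γn) a + quadForm n (GammaMat n γn) b
      + (((1 / (2 * n) : ℝ) *
          (Real.sqrt (∑ i, a i ^ 2) - Real.sqrt (∑ i, b i ^ 2)) ^ 2 : ℝ) : ℂ)
    ≤ 2 * quadForm (2 * n) (GammaMat (2 * n) γ2n) (interleave n a b) := by
  have hn : n ≠ 0 := hno.pos.ne'
  have hfourier := sum_two_mul_mul_add_sq_le_dftCoeff_interleave n a b (g := γn) (G := γ2n)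
    fun k hk => weights_dichotomy hno h00 h00' hsymn hsym2n hge hgap hk
  have hrev := sq_sqrt_sum_sub_sqrt_sum_le (range n) (fun k => ‖dftCoeff n a k‖)
    (fun k => ‖dftCoeff n b k‖)
  simp only [sum_norm_dftCoeff_sq hn, Real.sqrt_mul (Nat.cast_nonneg n), ← mul_sub, mul_pow,
    Real.sq_sqrt (Nat.cast_nonneg n)] at hrev
  simp only [sum_add_distrib, mul_add, mul_assoc, ← mul_sum] at hfourier
  rw [quadForm_GammaMat hn, quadForm_GammaMat hn, quadForm_GammaMat (by omega)]
  norm_cast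
  push_cast
  field_simp
  linarith

/-- odd case of the Dirichlet form comparison, Proposition 4.1:
under the compatibility conditions on the weight pair `(γ_n, γ_{2n})` and the
scalar inequality, the `n`-level Dirichlet forms are dominated by the `2n`-level one.
The conclusion is an inequality in the complex order. -/
theorem dirichlet_compare_odd (n : ℕ) (hn : 3 ≤ n) (hno : Odd n)
    (γn γ2n : ℕ → ℝ)
    (hγn0 : ∀ k, k < n → 0 ≤ γn k) (hγ2n0 : ∀ k, k < 2 * n → 0 ≤ γ2n k)
    (h00 : γn 0 = 0) (h00' : γ2n 0 = 0)
    (hsymn : ∀ k, 1 ≤ k → k ≤ n - 1 → γn k = γn (n - k))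
    (hsym2n : ∀ k, 1 ≤ k → k ≤ 2 * n - 1 → γ2n k = γ2n (2 * n - k))
    (hge : ∀ k, 1 ≤ k → k ≤ (n - 1) / 2 → γn k ≤ γ2n k)
    (hgap : ∀ k, k ≤ (n - 1) / 2 → 0 ≤ γ2n (n - k) - γ2n k - 1)
    (hscal : ∀ x : ℝ, 0 ≤ x →
      0 ≤ γ2n n * (1 - x) ^ 2 - (1 + x ^ 2) + 2 * x)
    (a b : Fin n → ℝ) (ha : ∀ i, 0 ≤ a i) (hb : ∀ i, 0 ≤ b i) :
    quadForm n (GammaMat n γn) a + quadForm n (GammaMat n γn) b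
      + (((1 / (2 * n) : ℝ) *
          (Real.sqrt (∑ i, a i ^ 2) - Real.sqrt (∑ i, b i ^ 2)) ^ 2 : ℝ) : ℂ)
    ≤ 2 * quadForm (2 * n) (GammaMat (2 * n) γ2n) (interleave n a b) :=
  dirichlet_compare_odd_general n hno γn γ2n h00 h00' hsymn hsym2n hge hgap a b
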